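/- Let w be a word of length n ≥ 2 using only two distinct letters A and M. Let T = {i : w_i = A and w_{n-i+1} = M} and t = |T|. Then f(w) ≥ n + t. -/

import Mathlib

/-! Write row `i` of the grid as `w` when `w i = A` and as the reversal of `w` otherwise, so that
every row contains `w`. Column `j` then reads `w j` in the rows with `w i = A` and `w j.rev` in the
others; when `w j = A` and `w j.rev = M`, and `w` uses no letter besides `A` and `M`, this column
is `w` itself. -/

namespace WordGrid

variable {α : Type*}

/-- The `i`-th row of the grid `G` contains the word `w` (forwards or backwards). -/
def rowC {n : ℕ} (w : Fin n → α) (G : Fin n → Fin n → α) (i : Fin n) : Prop :=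
  (∀ j, G i j = w j) ∨ (∀ j, G i j = w j.rev)

/-- The `i`-th column of the grid `G` contains the word `w` (forwards or backwards). -/
def colC {n : ℕ} (w : Fin n → α) (G : Fin n → Fin n → α) (i : Fin n) : Prop :=
  (∀ j, G j i = w j) ∨ (∀ j, G j i = w j.rev)

/-- The main diagonal of the grid `G` contains the word `w`. -/
def diagC {n : ℕ} (w : Fin n → α) (G : Fin n → Fin n → α) : Prop :=
  (∀ j, G j j = w j) ∨ (∀ j, G j j = w j.rev)

/-- The anti-diagonal of the grid `G` contains the word `w`. -/
def adiagC {n : ℕ} (w : Fin n → α) (G : Fin n → Fin n → α) : Prop :=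
  (∀ j, G j j.rev = w j) ∨ (∀ j, G j j.rev = w j.rev)

open Classical in
/-- `f(w,G)`: the number of rows, columns and diagonals of `G` containing `w`. -/
noncomputable def count {n : ℕ} (w : Fin n → α) (G : Fin n → Fin n → α) : ℕ :=
  {i | rowC w G i}.ncard + {i | colC w G i}.ncard
    + (if diagC w G then 1 else 0) + (if adiagC w G then 1 else 0)

/-- `f(w)`: the maximum of `f(w,G)` over all `n`-grids `G`. -/
noncomputable def fword {n : ℕ} (w : Fin n → α) : ℕ :=
  sSup {m | ∃ G : Fin n → Fin n → α, count w G = m}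

theorem count_le {n : ℕ} (w : Fin n → α) (G : Fin n → Fin n → α) : count w G ≤ 2 * n + 2 := by
  have hrow : {i | rowC w G i}.ncard ≤ n := by
    simpa using Set.ncard_le_ncard (Set.subset_univ {i | rowC w G i})
  have hcol : {i | colC w G i}.ncard ≤ n := by
    simpa using Set.ncard_le_ncard (Set.subset_univ {i | colC w G i})
  unfold count
  split <;> split <;> omega

theorem count_le_fword {n : ℕ} (w : Fin n → α) (G : Fin n → Fin n → α) : count w G ≤ fword w :=
  le_csSup ⟨2 * n + 2, by rintro m ⟨H, rfl⟩; exact count_le w H⟩ ⟨G, rfl⟩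

theorem ncard_rowC_add_ncard_colC_le_count {n : ℕ} (w : Fin n → α) (G : Fin n → Fin n → α) :
    {i | rowC w G i}.ncard + {i | colC w G i}.ncard ≤ count w G := by
  unfold count
  omega

def orientedRows {n : ℕ} [DecidableEq α] (w : Fin n → α) (a : α) : Fin n → Fin n → α :=
  fun i j => if w i = a then w j else w j.rev

section orientedRows

variable {n : ℕ} [DecidableEq α] (w : Fin n → α)

theorem rowC_orientedRows (a : α) (i : Fin n) : rowC w (orientedRows w a) i := by
  by_cases h : w i = a
  · exact Or.inl fun j => if_pos h
  · exact Or.inr fun j => if_neg h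

theorem ncard_rowC_orientedRows (a : α) : {i | rowC w (orientedRows w a) i}.ncard = n := by
  simp [rowC_orientedRows]

theorem colC_orientedRows {A M : α} (htwo : ∀ i, w i = A ∨ w i = M) {j : Fin n}
    (hjA : w j = A) (hjM : w j.rev = M) : colC w (orientedRows w A) j := by
  refine Or.inl fun i => ?_
  by_cases hA : w i = A
  · rw [orientedRows, if_pos hA, hjA, hA]
  · rw [orientedRows, if_neg hA, hjM, (htwo i).resolve_left hA]

end orientedRows

theorem fword_n_plus_t_general {n : ℕ} (w : Fin n → α)
    (A M : α) (htwo : ∀ i, w i = A ∨ w i = M) :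
    fword w ≥ n + {i | w i = A ∧ w i.rev = M}.ncard := by
  classical
  set G := orientedRows w A
  have hcol : {i | w i = A ∧ w i.rev = M}.ncard ≤ {i | colC w G i}.ncard :=
    Set.ncard_le_ncard (fun j ⟨hjA, hjM⟩ => colC_orientedRows w htwo hjA hjM)
  calc n + {i | w i = A ∧ w i.rev = M}.ncard
      ≤ {i | rowC w G i}.ncard + {i | colC w G i}.ncard := by
        rw [ncard_rowC_orientedRows]; omega
    _ ≤ count w G := ncard_rowC_add_ncard_colC_le_count w G
    _ ≤ fword w := count_le_fword w G

theorem fword_n_plus_t {n : ℕ} (hn : 2 ≤ n) (w : Fin n → α)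
    (A M : α) (hAM : A ≠ M) (htwo : ∀ i, w i = A ∨ w i = M) :
    fword w ≥ n + {i | w i = A ∧ w i.rev = M}.ncard :=
  fword_n_plus_t_general w A M htwo

end WordGrid
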